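/- arXiv:1208.4996 — 11 statements merged into one kernel-verified Lean document; each statement's English description precedes it below -/
import Mathlib

section
/- Let R be a ring and M a dual automorphism-invariant right R-module. If φ : M → M is a surjective R-module endomorphism whose kernel is a small submodule of M, then φ is an automorphism of M. -/
open LinearMap Submodule

/-- A submodule N of M is small (superfluous) in M:
N + K = M implies K = M for every submodule K. -/
def IsSmall {R : Type*} [Ring R] {M : Type*} [AddCommGroup M] [Module R M]
    (N : Submodule R M) : Prop :=
  ∀ K : Submodule R M, N ⊔ K = ⊤ → K = ⊤

/-- M is a dual automorphism-invariant R-module: for any two small submodules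
K₁, K₂ of M, every surjective homomorphism η : M/K₁ → M/K₂ whose kernel is
small in M/K₁ lifts to an endomorphism φ of M (i.e. π₂ ∘ φ = η ∘ π₁). -/
def IsDualAutoInv (R M : Type*) [Ring R] [AddCommGroup M] [Module R M] : Prop :=
  ∀ (K₁ K₂ : Submodule R M), IsSmall K₁ → IsSmall K₂ →
    ∀ η : (M ⧸ K₁) →ₗ[R] (M ⧸ K₂), Function.Surjective η →
      IsSmall (LinearMap.ker η) →
      ∃ φ : M →ₗ[R] M, K₂.mkQ ∘ₗ φ = η ∘ₗ K₁.mkQ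

lemma isSmall_bot {R : Type*} [Ring R] {M : Type*} [AddCommGroup M] [Module R M] :
    IsSmall (⊥ : Submodule R M) := by
  intro K hK
  simpa using hK

/-- If M is dual automorphism-invariant and φ : M → M is a surjective endomorphism
with small kernel, then φ is an automorphism. -/
theorem dualAutoInv_surjective_small_ker_bijective
    {R : Type*} [Ring R] {M : Type*} [AddCommGroup M] [Module R M]
    (hM : IsDualAutoInv R M) (φ : M →ₗ[R] M) (hsurj : Function.Surjective φ)
    (hker : IsSmall (LinearMap.ker φ)) : Function.Bijective φ := by
  set K := LinearMap.ker φ with hK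
  -- the induced isomorphism M/K ≃ M
  let e : (M ⧸ K) ≃ₗ[R] M := φ.quotKerEquivOfSurjective hsurj
  have he : ∀ x : M, e (K.mkQ x) = φ x := by
    intro x
    simp [e, LinearMap.quotKerEquivOfSurjective, LinearMap.quotKerEquivRange, K.mkQ_apply]
  -- the iso M/⊥ ≃ M
  let b : (M ⧸ (⊥ : Submodule R M)) ≃ₗ[R] M := Submodule.quotEquivOfEqBot ⊥ rfl
  let η : (M ⧸ (⊥ : Submodule R M)) →ₗ[R] (M ⧸ K) :=
    (e.symm.toLinearMap) ∘ₗ b.toLinearMap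
  have hηsurj : Function.Surjective η := by
    exact e.symm.surjective.comp b.surjective
  have hηker : LinearMap.ker η = ⊥ := by
    apply LinearMap.ker_eq_bot_of_injective
    exact e.symm.injective.comp b.injective
  obtain ⟨ψ, hψ⟩ := hM ⊥ K isSmall_bot hker η hηsurj (by rw [hηker]; exact isSmall_bot)
  have hψ' : ∀ m : M, K.mkQ (ψ m) = e.symm m := by
    intro m
    have := LinearMap.ext_iff.mp hψ m
    simpa [η, b, Submodule.quotEquivOfEqBot] using this
  have hφψ : ∀ m : M, φ (ψ m) = m := by
    intro m
    have := congrArg e (hψ' m)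
    rwa [he, LinearEquiv.apply_symm_apply] at this
  -- M = range ψ + ker φ
  have hsup : K ⊔ LinearMap.range ψ = ⊤ := by
    rw [eq_top_iff]
    intro m _
    have h1 : ψ (φ m) ∈ LinearMap.range ψ := ⟨φ m, rfl⟩
    have h2 : m - ψ (φ m) ∈ K := by
      simp [hK, LinearMap.mem_ker, map_sub, hφψ]
    have : m = (m - ψ (φ m)) + ψ (φ m) := by abel
    rw [this]
    exact Submodule.add_mem_sup h2 h1
  have hψsurj : Function.Surjective ψ := by
    rw [← LinearMap.range_eq_top]
    exact hker _ hsup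
  have hψinj : Function.Injective ψ := by
    intro a c h
    have := congrArg φ h
    rwa [hφψ, hφψ] at this
  constructor
  · intro a c h
    obtain ⟨a', rfl⟩ := hψsurj a
    obtain ⟨c', rfl⟩ := hψsurj c
    rw [hφψ, hφψ] at h
    rw [h]
  · exact hsurj
end

section
/- A right R-module M is dual automorphism-invariant if and only if for any two small submodules K₁ and K₂ of M, every surjective homomorphism η : M/K₁ → M/K₂ with small kernel lifts to an automorphism φ of M (i.e., π₂ ∘ φ = η ∘ π₁, where π₁, π₂ are the canonical projections). -/
open LinearMap Submodule

/-- M is dual automorphism-invariant iff for any two small submodules K₁, K₂ of M,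
every surjective homomorphism η : M/K₁ → M/K₂ with small kernel lifts to an
automorphism φ of M. -/
theorem dualAutoInv_iff_lifts_to_automorphism
    (R M : Type*) [Ring R] [AddCommGroup M] [Module R M] :
    IsDualAutoInv R M ↔
      ∀ (K₁ K₂ : Submodule R M), IsSmall K₁ → IsSmall K₂ →
        ∀ η : (M ⧸ K₁) →ₗ[R] (M ⧸ K₂), Function.Surjective η →
          IsSmall (LinearMap.ker η) →
          ∃ φ : M →ₗ[R] M, Function.Bijective φ ∧ K₂.mkQ ∘ₗ φ = η ∘ₗ K₁.mkQ := by
  constructor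
  · intro h K₁ K₂ h1 h2 η hsurj hkerη
    obtain ⟨φ, hφ⟩ := h K₁ K₂ h1 h2 η hsurj hkerη
    have hcomm : ∀ x : M, K₂.mkQ (φ x) = η (K₁.mkQ x) := fun x => LinearMap.congr_fun hφ x
    -- φ is surjective
    have hφsurj : Function.Surjective φ := by
      rw [← range_eq_top]
      apply h2
      rw [eq_top_iff]
      rintro y -
      obtain ⟨z, hz⟩ := hsurj (K₂.mkQ y)
      obtain ⟨x, rfl⟩ := K₁.mkQ_surjective z
      have hxy : y - φ x ∈ K₂ := by
        have h0 : K₂.mkQ (y - φ x) = 0 := by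
          rw [map_sub, hcomm x, hz, sub_self]
        rwa [Submodule.mkQ_apply, Submodule.Quotient.mk_eq_zero] at h0
      have : y = (y - φ x) + φ x := by abel
      rw [this]
      exact add_mem (Submodule.mem_sup_left hxy) (Submodule.mem_sup_right ⟨x, rfl⟩)
    -- ker φ is small
    have hkerφ : IsSmall (ker φ) := by
      intro K hK
      have hle : ker φ ≤ Submodule.comap K₁.mkQ (ker η) := by
        intro x hx
        rw [mem_ker] at hx
        rw [Submodule.mem_comap, mem_ker, ← hcomm x, hx, map_zero]
      have hK' : Submodule.comap K₁.mkQ (ker η) ⊔ K = ⊤ := by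
        rw [eq_top_iff, ← hK]
        exact sup_le_sup_right hle K
      have hmap : ker η ⊔ Submodule.map K₁.mkQ K = ⊤ := by
        have := congrArg (Submodule.map K₁.mkQ) hK'
        rwa [Submodule.map_sup, Submodule.map_top, Submodule.range_mkQ,
          Submodule.map_comap_eq_of_surjective K₁.mkQ_surjective] at this
      have htop := hkerη _ hmap
      have hKtop : K₁ ⊔ K = ⊤ := by
        have := congrArg (Submodule.comap K₁.mkQ) htop
        rwa [Submodule.comap_map_eq, Submodule.ker_mkQ, Submodule.comap_top, sup_comm] at this
      exact h1 K hKtop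
    -- build the inverse-side lift
    set e := φ.quotKerEquivOfSurjective hφsurj with he
    set e0 := Submodule.quotEquivOfEqBot (⊥ : Submodule R M) rfl with he0
    set ι : (M ⧸ (⊥ : Submodule R M)) →ₗ[R] (M ⧸ ker φ) :=
      e.symm.toLinearMap ∘ₗ e0.toLinearMap with hι
    have hbot : IsSmall (⊥ : Submodule R M) := fun K hK => by simpa using hK
    have hιsurj : Function.Surjective ι :=
      e.symm.surjective.comp e0.surjective
    have hιinj : Function.Injective ι := e.symm.injective.comp e0.injective
    have hιker : IsSmall (ker ι) := by
      rw [ker_eq_bot.mpr hιinj]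
      intro K hK
      simpa using hK
    obtain ⟨ψ, hψ⟩ := h ⊥ (ker φ) hbot hkerφ ι hιsurj hιker
    have key : ∀ x : M, φ (ψ x) = x := by
      intro x
      have h4 : (ker φ).mkQ (ψ x) = ι ((⊥ : Submodule R M).mkQ x) := LinearMap.congr_fun hψ x
      have h5 := congrArg e h4
      have hL : e ((ker φ).mkQ (ψ x)) = φ (ψ x) := rfl
      have hR : e (ι ((⊥ : Submodule R M).mkQ x)) = x := by
        show e (e.symm (e0 ((⊥ : Submodule R M).mkQ x))) = x
        rw [e.apply_symm_apply]
        rfl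
      rw [hL, hR] at h5
      exact h5
    -- φ is injective
    have hψrange : range ψ = ⊤ := by
      apply hkerφ
      rw [sup_comm, eq_top_iff]
      rintro x -
      have hmem : x - ψ (φ x) ∈ ker φ := by
        rw [mem_ker, map_sub, key (φ x), sub_self]
      have : x = ψ (φ x) + (x - ψ (φ x)) := by abel
      rw [this]
      exact add_mem (Submodule.mem_sup_left ⟨φ x, rfl⟩) (Submodule.mem_sup_right hmem)
    have hφinj : Function.Injective φ := by
      rw [← ker_eq_bot, eq_bot_iff]
      intro x hx
      have hx' : x ∈ range ψ := hψrange ▸ Submodule.mem_top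
      obtain ⟨a, rfl⟩ := hx'
      rw [mem_ker, key a] at hx
      rw [hx, map_zero]
      exact Submodule.zero_mem ⊥
    exact ⟨φ, ⟨hφinj, hφsurj⟩, hφ⟩
  · intro h K₁ K₂ h1 h2 η hs hk
    obtain ⟨φ, _, hφ⟩ := h K₁ K₂ h1 h2 η hs hk
    exact ⟨φ, hφ⟩
end

section
/- If R is a right V-ring (i.e., every simple right R-module is injective), then every right R-module is dual automorphism-invariant; indeed, every right R-module over a right V-ring has no nonzero small submodule. -/
open LinearMap Submodule

universe u v

/-- R is a (right) V-ring: every simple R-module is injective. -/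
def IsVRing (R : Type u) [Ring R] : Prop :=
  ∀ (M : Type u) [AddCommGroup M] [Module R M], IsSimpleModule R M → Module.Injective R M

/-- Over a V-ring, every nonzero element of any module lies outside some
maximal (coatom) submodule. -/
lemma exists_coatom_not_mem {R : Type u} [Ring R] (hR : IsVRing R)
    {M : Type v} [AddCommGroup M] [Module R M] {x : M} (hx : x ≠ 0) :
    ∃ P : Submodule R M, IsCoatom P ∧ x ∉ P := by
  -- Zorn: maximal submodule avoiding x
  obtain ⟨P, -, hP⟩ := zorn_le_nonempty₀ {P : Submodule R M | x ∉ P}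
    (fun c hcs hc y hy => by
      refine ⟨sSup c, ?_, fun z hz => le_sSup hz⟩
      intro hmem
      rw [Submodule.mem_sSup_of_directed ⟨y, hy⟩ hc.directedOn] at hmem
      obtain ⟨p, hp, hxp⟩ := hmem
      exact hcs hp hxp)
    ⊥ (by simpa using hx)
  refine ⟨P, ?_, hP.1⟩
  -- key claim: every nonzero submodule of M ⧸ P contains x̄
  have hxbar : P.mkQ x ≠ 0 := by
    simpa [Submodule.Quotient.mk_eq_zero] using hP.1
  have claim : ∀ T : Submodule R (M ⧸ P), T ≠ ⊥ → P.mkQ x ∈ T := by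
    intro T hT
    obtain ⟨y, hyT, hy0⟩ := Submodule.exists_mem_ne_zero_of_ne_bot hT
    obtain ⟨m, rfl⟩ := P.mkQ_surjective y
    have hmP : m ∉ P := fun h => hy0 (by simpa [Submodule.Quotient.mk_eq_zero] using h)
    have hPQ : ¬ (T.comap P.mkQ ≤ P) := fun h => hmP (h hyT)
    have hxQ : x ∈ T.comap P.mkQ := by
      by_contra hxQ
      exact hPQ (hP.2 hxQ (fun p hp => by
        simpa using Submodule.Quotient.mk_eq_zero P |>.2 hp ▸ T.zero_mem))
    exact hxQ
  -- the atom S = span {x̄}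
  set f : R →ₗ[R] (M ⧸ P) := LinearMap.toSpanSingleton R _ (P.mkQ x) with hf
  have hrange : LinearMap.range f = Submodule.span R {P.mkQ x} :=
    (LinearMap.span_singleton_eq_range R _ _).symm
  have hSne : LinearMap.range f ≠ ⊥ := by
    rw [hrange, Submodule.span_singleton_eq_bot.ne]
    exact hxbar
  have hatom : IsAtom (LinearMap.range f) := by
    constructor
    · exact hSne
    · intro T hT
      by_contra hTne
      have := claim T hTne
      have : LinearMap.range f ≤ T := by
        rw [hrange]; exact (Submodule.span_singleton_le_iff_mem _ _).2 this
      exact absurd this hT.not_ge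
  have hsimple : IsSimpleModule R ↥(LinearMap.range f) :=
    isSimpleModule_iff_isAtom.2 hatom
  have hsimple' : IsSimpleModule R (R ⧸ LinearMap.ker f) :=
    IsSimpleModule.congr f.quotKerEquivRange
  have hinj : Module.Injective R (R ⧸ LinearMap.ker f) := hR _ hsimple'
  have hbaer : Module.Baer R (R ⧸ LinearMap.ker f) := Module.Baer.of_injective hinj
  -- retraction onto range f
  set e : (R ⧸ LinearMap.ker f) ≃ₗ[R] ↥(LinearMap.range f) := f.quotKerEquivRange with he
  obtain ⟨h, hh⟩ := hbaer.extension_property (LinearMap.range f).subtype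
    (Submodule.injective_subtype _) e.symm.toLinearMap
  set ρ : (M ⧸ P) →ₗ[R] (M ⧸ P) :=
    (LinearMap.range f).subtype ∘ₗ e.toLinearMap ∘ₗ h with hρ
  have hρs : ∀ s : ↥(LinearMap.range f), ρ (s : M ⧸ P) = s := by
    intro s
    have := LinearMap.congr_fun hh s
    simp only [LinearMap.comp_apply, Submodule.subtype_apply] at this ⊢
    rw [hρ]
    simp [this]
  -- range f = ⊤
  have hker : ∀ z : M ⧸ P, ρ z = 0 → z = 0 := by
    intro z hz
    by_contra hz0
    have hxk : P.mkQ x ∈ LinearMap.ker ρ := by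
      refine claim _ (fun hb => hz0 ?_)
      have : z ∈ LinearMap.ker ρ := hz
      rw [hb] at this; simpa using this
    have : ρ (P.mkQ x) = P.mkQ x := by
      have hmem : P.mkQ x ∈ LinearMap.range f := by
        rw [hrange]; exact Submodule.mem_span_singleton_self _
      simpa using hρs ⟨_, hmem⟩
    rw [LinearMap.mem_ker, this] at hxk
    exact hxbar hxk
  have htop : LinearMap.range f = ⊤ := by
    rw [eq_top_iff]
    intro z _
    have h1 : ρ (z - ρ z) = 0 := by
      have : ρ z ∈ LinearMap.range f := by
        rw [hρ]; exact Submodule.coe_mem _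
      rw [map_sub, hρs ⟨_, this⟩]
      simp
    have h2 : z = ρ z := by
      have := hker _ h1
      rwa [sub_eq_zero] at this
    rw [h2, hρ]
    exact Submodule.coe_mem _
  -- P is a coatom
  constructor
  · intro h
    exact hP.1 (h ▸ Submodule.mem_top)
  · intro Q hQ
    obtain ⟨m, hmQ, hmP⟩ := SetLike.exists_of_lt hQ
    have hmap : Submodule.map P.mkQ Q ≠ ⊥ := by
      intro hb
      have : P.mkQ m ∈ Submodule.map P.mkQ Q := ⟨m, hmQ, rfl⟩
      rw [hb] at this
      exact hmP (by simpa [Submodule.Quotient.mk_eq_zero] using this)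
    have hmaptop : Submodule.map P.mkQ Q = ⊤ := by
      rw [eq_top_iff, ← htop, hrange]
      exact (Submodule.span_singleton_le_iff_mem _ _).2 (claim _ hmap)
    have : Submodule.comap P.mkQ (Submodule.map P.mkQ Q) = Q := by
      rw [Submodule.comap_map_eq, Submodule.ker_mkQ, sup_eq_left]
      exact hQ.le
    rw [hmaptop, Submodule.comap_top] at this
    exact this.symm

/-- Over a V-ring, every small submodule is zero. -/
lemma isSmall_eq_bot {R : Type u} [Ring R] (hR : IsVRing R)
    {M : Type v} [AddCommGroup M] [Module R M]
    {N : Submodule R M} (hN : IsSmall N) : N = ⊥ := by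
  by_contra hNb
  obtain ⟨x, hxN, hx0⟩ := Submodule.exists_mem_ne_zero_of_ne_bot hNb
  obtain ⟨P, hP, hxP⟩ := exists_coatom_not_mem hR hx0
  have hlt : P < N ⊔ P := lt_of_le_of_ne le_sup_right
    (fun h => hxP (h ▸ Submodule.mem_sup_left hxN))
  have := hN P (hP.2 _ hlt)
  exact hP.1 this

/-- Over a V-ring every module is dual automorphism-invariant; indeed every module
has no nonzero small submodule. -/
theorem vRing_every_module_dualAutoInv
    {R : Type u} [Ring R] (hR : IsVRing R)
    (M : Type v) [AddCommGroup M] [Module R M] :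
    IsDualAutoInv R M ∧ ∀ N : Submodule R M, IsSmall N → N = ⊥ := by
  constructor
  · intro K₁ K₂ h₁ h₂ η hsurj hker
    have hK₂ : K₂ = ⊥ := isSmall_eq_bot hR h₂
    refine ⟨(K₂.quotEquivOfEqBot hK₂).toLinearMap ∘ₗ η ∘ₗ K₁.mkQ, ?_⟩
    ext m
    obtain ⟨q, hq⟩ := Submodule.Quotient.mk_surjective K₂ (η (K₁.mkQ m))
    simp only [LinearMap.comp_apply, LinearEquiv.coe_coe]
    rw [← hq, Submodule.quotEquivOfEqBot_apply_mk]
    rfl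
  · exact fun N hN => isSmall_eq_bot hR hN
end

section
/- Let M₁ and M₂ be right R-modules such that M = M₁ ⊕ M₂ is dual automorphism-invariant. Then for any small submodule K₂ of M₂, every homomorphism f : M₁ → M₂/K₂ whose kernel is small in M₁ lifts to a homomorphism g : M₁ → M₂ (i.e., π ∘ g = f where π : M₂ → M₂/K₂ is the canonical projection). -/
open LinearMap Submodule

lemma isSmall_mono {R : Type*} [Ring R] {M : Type*} [AddCommGroup M] [Module R M]
    {N N' : Submodule R M} (hle : N ≤ N') (h : IsSmall N') : IsSmall N := by
  intro K hK
  apply h K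
  rw [eq_top_iff, ← hK]
  exact sup_le_sup hle le_rfl

lemma isSmall_prod_bot {R : Type*} [Ring R] {M₁ M₂ : Type*} [AddCommGroup M₁] [Module R M₁]
    [AddCommGroup M₂] [Module R M₂] {K₂ : Submodule R M₂} (hK₂ : IsSmall K₂) :
    IsSmall ((⊥ : Submodule R M₁).prod K₂) := by
  intro K hK
  -- first show that comap inr K together with K₂ is all of M₂
  have h2 : K₂ ⊔ K.comap (LinearMap.inr R M₁ M₂) = ⊤ := by
    rw [eq_top_iff]
    rintro m₂ -
    have : ((0 : M₁), m₂) ∈ (⊥ : Submodule R M₁).prod K₂ ⊔ K := hK ▸ mem_top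
    obtain ⟨y, hy, z, hz, hyz⟩ := Submodule.mem_sup.mp this
    obtain ⟨hy1, hy2⟩ := Submodule.mem_prod.mp hy
    have hz1 : z.1 = 0 := by
      have := congrArg Prod.fst hyz
      simp only [Prod.fst_add] at this
      simp only [Submodule.mem_bot] at hy1
      rw [hy1] at this; simpa using this
    refine Submodule.mem_sup.mpr ⟨y.2, hy2, z.2, ?_, ?_⟩
    · show ((0 : M₁), z.2) ∈ K
      have : z = (0, z.2) := Prod.ext hz1 rfl
      rwa [this] at hz
    · have := congrArg Prod.snd hyz
      simpa using this
  have htot : K.comap (LinearMap.inr R M₁ M₂) = ⊤ := hK₂ _ h2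
  -- hence ⊥ × M₂ ⊆ K, so K = ⊤
  have hbotM₂ : ∀ m₂ : M₂, ((0 : M₁), m₂) ∈ K := by
    intro m₂
    have : m₂ ∈ K.comap (LinearMap.inr R M₁ M₂) := htot ▸ mem_top
    simpa using this
  rw [eq_top_iff]
  rintro ⟨m₁, m₂⟩ -
  have : (m₁, m₂) ∈ (⊥ : Submodule R M₁).prod K₂ ⊔ K := hK ▸ mem_top
  obtain ⟨y, hy, z, hz, hyz⟩ := Submodule.mem_sup.mp this
  obtain ⟨hy1, hy2⟩ := Submodule.mem_prod.mp hy
  simp only [Submodule.mem_bot] at hy1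
  have hyK : y ∈ K := by
    have : y = (0, y.2) := Prod.ext hy1 rfl
    rw [this]; exact hbotM₂ y.2
  have := K.add_mem hyK hz
  rwa [hyz] at this

lemma isSmall_of_comap_surjective {R : Type*} [Ring R] {A B : Type*}
    [AddCommGroup A] [Module R A] [AddCommGroup B] [Module R B]
    (σ : A →ₗ[R] B) (hσ : Function.Surjective σ) {N : Submodule R B}
    (h : IsSmall (N.comap σ)) : IsSmall N := by
  intro K hK
  have hsup : N.comap σ ⊔ K.comap σ = ⊤ := by
    rw [eq_top_iff]
    rintro a -
    have : σ a ∈ N ⊔ K := hK ▸ mem_top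
    obtain ⟨n, hn, k, hk, hnk⟩ := Submodule.mem_sup.mp this
    obtain ⟨a₁, rfl⟩ := hσ n
    refine Submodule.mem_sup.mpr ⟨a₁, hn, a - a₁, ?_, by abel⟩
    show σ (a - a₁) ∈ K
    rw [map_sub]
    have : σ a - σ a₁ = k := by rw [← hnk]; abel
    rwa [this]
  have := h _ hsup
  rw [eq_top_iff]
  rintro b -
  obtain ⟨a, rfl⟩ := hσ b
  have : a ∈ K.comap σ := this ▸ mem_top
  simpa using this

/-- If M₁ ⊕ M₂ is dual automorphism-invariant, then any homomorphism
f : M₁ → M₂/K₂ with K₂ small in M₂ and kernel of f small in M₁ lifts to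
a homomorphism g : M₁ → M₂. -/
theorem dualAutoInv_prod_lifting
    {R : Type*} [Ring R] {M₁ M₂ : Type*} [AddCommGroup M₁] [Module R M₁]
    [AddCommGroup M₂] [Module R M₂] (h : IsDualAutoInv R (M₁ × M₂))
    (K₂ : Submodule R M₂) (hK₂ : IsSmall K₂)
    (f : M₁ →ₗ[R] M₂ ⧸ K₂) (hker : IsSmall (LinearMap.ker f)) :
    ∃ g : M₁ →ₗ[R] M₂, K₂.mkQ ∘ₗ g = f := by
  set P : Submodule R (M₁ × M₂) := (⊥ : Submodule R M₁).prod K₂ with hP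
  -- j : M₂/K₂ → (M₁×M₂)/P induced by inr
  have hjle : K₂ ≤ P.comap (LinearMap.inr R M₁ M₂) := by
    intro x hx; simp [hP, hx]
  set j : (M₂ ⧸ K₂) →ₗ[R] ((M₁ × M₂) ⧸ P) :=
    K₂.mapQ P (LinearMap.inr R M₁ M₂) hjle with hj
  have hjapp : ∀ x : M₂, j (K₂.mkQ x) = P.mkQ (0, x) := fun x => rfl
  -- e : M₁ × M₂ → (M₁×M₂)/P
  set e : (M₁ × M₂) →ₗ[R] ((M₁ × M₂) ⧸ P) :=
    P.mkQ + j ∘ₗ f ∘ₗ LinearMap.fst R M₁ M₂ with he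
  have heapp : ∀ m : M₁ × M₂, e m = P.mkQ m + j (f m.1) := fun m => rfl
  -- η : (M₁×M₂)/⊥ → (M₁×M₂)/P
  set η : ((M₁ × M₂) ⧸ (⊥ : Submodule R (M₁ × M₂))) →ₗ[R] ((M₁ × M₂) ⧸ P) :=
    (⊥ : Submodule R (M₁ × M₂)).liftQ e (by simp) with hη
  have hηapp : ∀ m : M₁ × M₂, η ((⊥ : Submodule R (M₁ × M₂)).mkQ m) = e m :=
    fun m => rfl
  -- η is surjective
  have hsurj : Function.Surjective η := by
    intro q
    obtain ⟨⟨a, b⟩, rfl⟩ := P.mkQ_surjective q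
    obtain ⟨x, hx⟩ := K₂.mkQ_surjective (f a)
    refine ⟨(⊥ : Submodule R (M₁ × M₂)).mkQ (a, b - x), ?_⟩
    rw [hηapp, heapp]
    simp only
    rw [← hx, hjapp]
    rw [← map_add]
    congr 1
    ext <;> simp
  -- q₁ : (M₁×M₂)/P → M₁ induced by fst
  have hq₁le : P ≤ LinearMap.ker (LinearMap.fst R M₁ M₂) := by
    rintro ⟨a, b⟩ hab
    obtain ⟨ha, -⟩ := Submodule.mem_prod.mp hab
    simpa using ha
  set q₁ : ((M₁ × M₂) ⧸ P) →ₗ[R] M₁ := P.liftQ (LinearMap.fst R M₁ M₂) hq₁le with hq₁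
  have hq₁app : ∀ m : M₁ × M₂, q₁ (P.mkQ m) = m.1 := fun m => rfl
  -- ker e = P
  have hkere : LinearMap.ker e = P := by
    ext ⟨a, b⟩
    simp only [LinearMap.mem_ker]
    constructor
    · intro hab
      rw [heapp] at hab
      have ha : a = 0 := by
        have := congrArg q₁ hab
        simp only [map_add, hq₁app, map_zero] at this
        obtain ⟨x, hx⟩ := K₂.mkQ_surjective (f a)
        rw [← hx, hjapp, hq₁app] at this
        simpa using this
      subst ha
      simp only [map_zero] at hab
      rw [add_zero] at hab
      have : ((0 : M₁), b) ∈ P := (Submodule.Quotient.mk_eq_zero P).mp hab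
      exact this
    · intro hab
      obtain ⟨ha, hb⟩ := Submodule.mem_prod.mp hab
      simp only [Submodule.mem_bot] at ha
      subst ha
      rw [heapp]
      simp only [map_zero]
      rw [add_zero]
      exact (Submodule.Quotient.mk_eq_zero P).mpr hab
  -- ker η is small
  have hkerη : IsSmall (LinearMap.ker η) := by
    apply isSmall_of_comap_surjective (⊥ : Submodule R (M₁ × M₂)).mkQ
      (⊥ : Submodule R (M₁ × M₂)).mkQ_surjective
    have : (LinearMap.ker η).comap (⊥ : Submodule R (M₁ × M₂)).mkQ
        = LinearMap.ker e := by
      ext m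
      simp only [Submodule.mem_comap, LinearMap.mem_ker, hηapp]
    rw [this, hkere]
    exact isSmall_prod_bot hK₂
  obtain ⟨φ, hφ⟩ := h ⊥ P isSmall_bot (isSmall_prod_bot hK₂) η hsurj hkerη
  -- p : (M₁×M₂)/P → M₂/K₂ induced by snd
  have hple : P ≤ K₂.comap (LinearMap.snd R M₁ M₂) := by
    rintro ⟨a, b⟩ hab
    exact (Submodule.mem_prod.mp hab).2
  set p : ((M₁ × M₂) ⧸ P) →ₗ[R] (M₂ ⧸ K₂) :=
    P.mapQ K₂ (LinearMap.snd R M₁ M₂) hple with hp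
  have hpapp : ∀ m : M₁ × M₂, p (P.mkQ m) = K₂.mkQ m.2 := fun m => rfl
  refine ⟨LinearMap.snd R M₁ M₂ ∘ₗ φ ∘ₗ LinearMap.inl R M₁ M₂, ?_⟩
  ext m₁
  have key : P.mkQ (φ (m₁, 0)) = η ((⊥ : Submodule R (M₁ × M₂)).mkQ (m₁, 0)) := by
    have := congrArg (fun ψ => ψ (m₁, 0)) hφ
    simpa using this
  rw [hηapp, heapp] at key
  have := congrArg p key
  rw [hpapp, map_add, hpapp] at this
  simp only at this
  obtain ⟨x, hx⟩ := K₂.mkQ_surjective (f m₁)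
  rw [← hx, hjapp, hpapp] at this
  simp only [map_zero, zero_add] at this
  simpa using this.trans hx
end

section
/- Every pseudo-projective right R-module is dual automorphism-invariant. -/
open LinearMap Submodule

/-- M is pseudo-projective: every surjective homomorphism M → M/N lifts to an
endomorphism of M. -/
def IsPseudoProjective (R M : Type*) [Ring R] [AddCommGroup M] [Module R M] : Prop :=
  ∀ (N : Submodule R M) (φ : M →ₗ[R] M ⧸ N), Function.Surjective φ →
    ∃ ψ : M →ₗ[R] M, N.mkQ ∘ₗ ψ = φ

/-- Every pseudo-projective module is dual automorphism-invariant. -/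
theorem pseudoProjective_dualAutoInv
    {R M : Type*} [Ring R] [AddCommGroup M] [Module R M]
    (h : IsPseudoProjective R M) : IsDualAutoInv R M := by
  intro K₁ K₂ _ _ η hsurj _
  exact h K₂ (η ∘ₗ K₁.mkQ) (hsurj.comp K₁.mkQ_surjective)
end

section
/- Let M₁ and M₂ be right R-modules. If M = M₁ ⊕ M₂ is pseudo-projective, then M₁ is M₂-projective and M₂ is M₁-projective. -/
open LinearMap Submodule

/-- A is B-projective: every homomorphism A → B/N lifts to a homomorphism A → B. -/
def IsRelProjective (R A B : Type*) [Ring R] [AddCommGroup A] [Module R A]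
    [AddCommGroup B] [Module R B] : Prop :=
  ∀ (N : Submodule R B) (f : A →ₗ[R] B ⧸ N), ∃ g : A →ₗ[R] B, N.mkQ ∘ₗ g = f

/-! Identifying `X` with a quotient of `M` through one surjection `M → X`, pseudo-projectivity
lifts every other surjection `M → X` through it. For `f : A → B/N`, the shear
`(a, b) ↦ (a, f a + [b])` and the projection `(a, b) ↦ (a, [b])` are such a pair for
`M = A × B`, `X = A × B/N`; the `B`-component of the lift `ψ`, restricted to `A`, lifts `f`.
Swapping the factors gives the other half. -/

namespace IsPseudoProjective

variable {R M : Type*} [Ring R] [AddCommGroup M] [Module R M]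

theorem exists_comp_eq {X : Type*} [AddCommGroup X] [Module R X] (h : IsPseudoProjective R M)
    {p φ : M →ₗ[R] X} (hp : Function.Surjective p) (hφ : Function.Surjective φ) :
    ∃ ψ : M →ₗ[R] M, p ∘ₗ ψ = φ := by
  let e := p.quotKerEquivOfSurjective hp
  obtain ⟨ψ, hψ⟩ := h (ker p) (e.symm.toLinearMap ∘ₗ φ) (e.symm.surjective.comp hφ)
  refine ⟨ψ, ?_⟩
  calc p ∘ₗ ψ = e.toLinearMap ∘ₗ (ker p).mkQ ∘ₗ ψ := rfl
    _ = φ := by rw [hψ, ← LinearMap.comp_assoc, LinearEquiv.comp_symm, LinearMap.id_comp]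

theorem of_linearEquiv {M' : Type*} [AddCommGroup M'] [Module R M'] (h : IsPseudoProjective R M)
    (e : M ≃ₗ[R] M') : IsPseudoProjective R M' := by
  intro N φ hφ
  obtain ⟨ψ, hψ⟩ := h.exists_comp_eq (p := N.mkQ ∘ₗ e.toLinearMap) (φ := φ ∘ₗ e.toLinearMap)
    (N.mkQ_surjective.comp e.surjective) (hφ.comp e.surjective)
  refine ⟨e.toLinearMap ∘ₗ ψ ∘ₗ e.symm.toLinearMap, LinearMap.ext fun x => ?_⟩
  simpa using congr($hψ (e.symm x))

end IsPseudoProjective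

theorem IsRelProjective.of_isPseudoProjective_prod {R A B : Type*} [Ring R] [AddCommGroup A]
    [Module R A] [AddCommGroup B] [Module R B] (h : IsPseudoProjective R (A × B)) :
    IsRelProjective R A B := by
  intro N f
  let p : A × B →ₗ[R] A × (B ⧸ N) := LinearMap.prodMap LinearMap.id N.mkQ
  let shear : A × B →ₗ[R] A × (B ⧸ N) := LinearMap.fst R A B |>.prod
    (f ∘ₗ LinearMap.fst R A B + N.mkQ ∘ₗ LinearMap.snd R A B)
  have hp : Function.Surjective p :=
    Function.Surjective.prodMap Function.surjective_id N.mkQ_surjective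
  have hshear : Function.Surjective shear := by
    rintro ⟨a, c⟩
    obtain ⟨b, hb⟩ := N.mkQ_surjective (c - f a)
    exact ⟨(a, b), by simp [shear, hb]⟩
  obtain ⟨ψ, hψ⟩ := h.exists_comp_eq hp hshear
  refine ⟨LinearMap.snd R A B ∘ₗ ψ ∘ₗ LinearMap.inl R A B, LinearMap.ext fun a => ?_⟩
  simpa [p, shear] using congr(($hψ (a, 0)).2)

/-- If M₁ ⊕ M₂ is pseudo-projective then M₁ is M₂-projective and M₂ is M₁-projective. -/
theorem pseudoProjective_prod_relProjective
    {R : Type*} [Ring R] {M₁ M₂ : Type*} [AddCommGroup M₁] [Module R M₁]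
    [AddCommGroup M₂] [Module R M₂] (h : IsPseudoProjective R (M₁ × M₂)) :
    IsRelProjective R M₁ M₂ ∧ IsRelProjective R M₂ M₁ :=
  ⟨.of_isPseudoProjective_prod h,
    .of_isPseudoProjective_prod (h.of_linearEquiv (LinearEquiv.prodComm R M₁ M₂))⟩
end

section
/- If every right R-module is pseudo-projective, then R is a semisimple (artinian) ring. -/
/-!
Let `I` be a submodule of `R` and `p : R → R/I` the projection. The module `R × R/I` maps onto
`R/I × R/I` both by `p × id` and by its composite with the swap of the two factors.
Pseudo-projectivity of `R × R/I` lifts the swapped map through `p × id` to an endomorphism `ψ`,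
and then `q ↦ (ψ (0, q)).1` is a section of `p`, so `I` is a direct summand.
-/

open LinearMap Submodule

universe u

variable {R M N : Type*} [Ring R] [AddCommGroup M] [Module R M] [AddCommGroup N] [Module R N]

theorem IsPseudoProjective.exists_comp_eq_s7 {f g : M →ₗ[R] N} (hM : IsPseudoProjective R M)
    (hf : Function.Surjective f) (hg : Function.Surjective g) :
    ∃ ψ : M →ₗ[R] M, f ∘ₗ ψ = g := by
  let e := f.quotKerEquivOfSurjective hf
  obtain ⟨ψ, hψ⟩ := hM (ker f) (e.symm.toLinearMap ∘ₗ g) (e.symm.surjective.comp hg)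
  refine ⟨ψ, LinearMap.ext fun x => ?_⟩
  simpa [e] using congr(e ($hψ x))

theorem IsPseudoProjective.exists_comp_eq_id_of_prod {p : M →ₗ[R] N}
    (h : IsPseudoProjective R (M × N)) (hp : Function.Surjective p) :
    ∃ s : N →ₗ[R] M, p ∘ₗ s = LinearMap.id := by
  let f : M × N →ₗ[R] N × N := p.prodMap LinearMap.id
  have hf : Function.Surjective f := hp.prodMap Function.surjective_id
  let swap := (LinearEquiv.prodComm R N N).toLinearMap
  obtain ⟨ψ, hψ⟩ :=
    h.exists_comp_eq_s7 (g := swap ∘ₗ f) hf ((LinearEquiv.prodComm R N N).surjective.comp hf)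
  refine ⟨LinearMap.fst R M N ∘ₗ ψ ∘ₗ LinearMap.inr R M N, LinearMap.ext fun y => ?_⟩
  simpa [f, swap] using congr(($hψ (0, y)).1)

theorem LinearMap.isCompl_range_ker_of_comp_eq_id {p : M →ₗ[R] N} {s : N →ₗ[R] M}
    (hs : p ∘ₗ s = LinearMap.id) : IsCompl (range s) (ker p) := by
  have hidem : IsIdempotentElem (s ∘ₗ p) := by
    rw [IsIdempotentElem, Module.End.mul_eq_comp, comp_assoc, ← comp_assoc p, hs, id_comp]
  have hp : range p = ⊤ := range_eq_top.mpr fun y => ⟨s y, congr($hs y)⟩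
  have hs_inj : ker s = ⊥ := ker_eq_bot_of_inverse hs
  simpa [range_comp_of_range_eq_top s hp, ker_comp, hs_inj] using hidem.isCompl

theorem IsSemisimpleModule.of_isPseudoProjective_prod_quotient
    (h : ∀ P : Submodule R M, IsPseudoProjective R (M × (M ⧸ P))) :
    IsSemisimpleModule R M where
  exists_isCompl P := by
    obtain ⟨s, hs⟩ := (h P).exists_comp_eq_id_of_prod P.mkQ_surjective
    exact ⟨range s, by simpa using (isCompl_range_ker_of_comp_eq_id hs).symm⟩

/-- If every R-module is pseudo-projective, then R is semisimple artinian. -/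
theorem every_module_pseudoProjective_isSemisimpleRing (R : Type u) [Ring R]
    (h : ∀ (M : Type u) [AddCommGroup M] [Module R M], IsPseudoProjective R M) :
    IsSemisimpleRing R :=
  IsSemisimpleModule.of_isPseudoProjective_prod_quotient fun P => h (R × (R ⧸ P))
end

section
/- If M₁ and M₂ are local right R-modules such that M₁ ⊕ M₂ is dual automorphism-invariant, then M₁ is M₂-projective and M₂ is M₁-projective. -/
open LinearMap Submodule

/-- M is hollow: every proper submodule of M is small in M. -/
def IsHollow (R M : Type*) [Ring R] [AddCommGroup M] [Module R M] : Prop :=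
  ∀ N : Submodule R M, N ≠ ⊤ → IsSmall N

/-- M is local: M is hollow and has a unique maximal submodule. -/
def IsLocalModule (R M : Type*) [Ring R] [AddCommGroup M] [Module R M] : Prop :=
  IsHollow R M ∧ ∃! N : Submodule R M, IsCoatom N

lemma isSmall_map {R M M' : Type*} [Ring R] [AddCommGroup M] [Module R M]
    [AddCommGroup M'] [Module R M'] (e : M ≃ₗ[R] M') {N : Submodule R M}
    (hN : IsSmall N) : IsSmall (N.map (e : M →ₗ[R] M')) := by
  intro L hL
  have h1 : Submodule.map (e.symm : M' →ₗ[R] M) (N.map (e : M →ₗ[R] M') ⊔ L) = ⊤ := by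
    rw [hL]
    simp [Submodule.map_top, LinearMap.range_eq_top.mpr e.symm.surjective]
  rw [Submodule.map_sup] at h1
  have h2 : Submodule.map (e.symm : M' →ₗ[R] M) (N.map (e : M →ₗ[R] M')) = N := by
    rw [← Submodule.map_comp]
    simp
  rw [h2] at h1
  have h3 := hN _ h1
  have : Submodule.map (e : M →ₗ[R] M') (Submodule.map (e.symm : M' →ₗ[R] M) L) = L := by
    rw [← Submodule.map_comp]; simp
  rw [h3] at this
  simpa [Submodule.map_top, LinearMap.range_eq_top.mpr e.surjective] using this.symm


lemma isDualAutoInv_congr {R M M' : Type*} [Ring R] [AddCommGroup M] [Module R M]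
    [AddCommGroup M'] [Module R M'] (e : M ≃ₗ[R] M')
    (h : IsDualAutoInv R M) : IsDualAutoInv R M' := by
  intro K₁' K₂' hK₁' hK₂' η' hsurj' hker'
  set K₁ : Submodule R M := K₁'.map (e.symm : M' →ₗ[R] M) with hK₁def
  set K₂ : Submodule R M := K₂'.map (e.symm : M' →ₗ[R] M) with hK₂def
  have hmap₁ : K₁.map (e : M →ₗ[R] M') = K₁' := by
    rw [hK₁def, ← Submodule.map_comp]; simp
  have hmap₂ : K₂.map (e : M →ₗ[R] M') = K₂' := by
    rw [hK₂def, ← Submodule.map_comp]; simp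
  have hK₁ : IsSmall K₁ := isSmall_map e.symm hK₁'
  have hK₂ : IsSmall K₂ := isSmall_map e.symm hK₂'
  let e₁ : (M ⧸ K₁) ≃ₗ[R] (M' ⧸ K₁') := Submodule.Quotient.equiv K₁ K₁' e hmap₁
  let e₂ : (M ⧸ K₂) ≃ₗ[R] (M' ⧸ K₂') := Submodule.Quotient.equiv K₂ K₂' e hmap₂
  have he₁ : ∀ x : M, e₁ (K₁.mkQ x) = K₁'.mkQ (e x) := fun x => rfl
  have he₂ : ∀ x : M, e₂ (K₂.mkQ x) = K₂'.mkQ (e x) := fun x => rfl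
  set η : (M ⧸ K₁) →ₗ[R] (M ⧸ K₂) :=
    (e₂.symm : (M' ⧸ K₂') →ₗ[R] (M ⧸ K₂)) ∘ₗ η' ∘ₗ (e₁ : (M ⧸ K₁) →ₗ[R] (M' ⧸ K₁')) with hηdef
  have hsurj : Function.Surjective η := by
    simp only [hηdef, LinearMap.coe_comp, LinearEquiv.coe_coe]
    exact e₂.symm.surjective.comp (hsurj'.comp e₁.surjective)
  have hkerη : LinearMap.ker η = (LinearMap.ker η').map (e₁.symm : (M' ⧸ K₁') →ₗ[R] (M ⧸ K₁)) := by
    ext x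
    simp only [hηdef, LinearMap.mem_ker, LinearMap.coe_comp, Function.comp_apply,
      LinearEquiv.coe_coe]
    constructor
    · intro hx
      refine ⟨e₁ x, ?_, by simp⟩
      simpa using congrArg e₂ hx
    · rintro ⟨y, hy, rfl⟩
      simp only [SetLike.mem_coe, LinearMap.mem_ker] at hy
      simp [hy]
  have hker : IsSmall (LinearMap.ker η) := hkerη ▸ isSmall_map e₁.symm hker'
  obtain ⟨φ, hφ⟩ := h K₁ K₂ hK₁ hK₂ η hsurj hker
  refine ⟨(e : M →ₗ[R] M') ∘ₗ φ ∘ₗ (e.symm : M' →ₗ[R] M), ?_⟩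
  ext x'
  have hx := congrArg (fun ψ => ψ (e.symm x')) hφ
  simp only [LinearMap.coe_comp, Function.comp_apply, mkQ_apply, LinearEquiv.coe_coe] at hx ⊢
  have step1 : (Submodule.Quotient.mk (e (φ (e.symm x'))) : M' ⧸ K₂')
      = e₂ (Submodule.Quotient.mk (φ (e.symm x'))) := rfl
  rw [step1, hx, hηdef]
  simp only [LinearMap.coe_comp, Function.comp_apply, LinearEquiv.coe_coe,
    LinearEquiv.apply_symm_apply]
  congr 1
  have step2 : e₁ (Submodule.Quotient.mk (e.symm x'))
      = (Submodule.Quotient.mk (e (e.symm x')) : M' ⧸ K₁') := rfl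
  rw [step2]
  simp

lemma relProj_of_hollow_dualAutoInv {R M₁ M₂ : Type*} [Ring R]
    [AddCommGroup M₁] [Module R M₁] [AddCommGroup M₂] [Module R M₂]
    (h₂ : IsHollow R M₂) (h : IsDualAutoInv R (M₁ × M₂)) :
    IsRelProjective R M₁ M₂ := by
  intro N f
  by_cases hN : N = ⊤
  · subst hN
    have : Subsingleton (M₂ ⧸ (⊤ : Submodule R M₂)) :=
      Submodule.Quotient.subsingleton_iff.mpr rfl
    exact ⟨0, LinearMap.ext fun x => Subsingleton.elim _ _⟩
  have hNs : IsSmall N := h₂ N hN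
  set K : Submodule R (M₁ × M₂) := (⊥ : Submodule R M₁).prod N with hKdef
  -- K is small
  have hKsmall : IsSmall K := by
    intro L hL
    -- first: every (0, b) is in L up to N
    have hinr : ∀ b : M₂, ∃ n ∈ N, ((0 : M₁), b - n) ∈ L := by
      intro b
      have hb : ((0 : M₁), b) ∈ K ⊔ L := by rw [hL]; trivial
      obtain ⟨k, hk, l, hl, hkl⟩ := Submodule.mem_sup.mp hb
      obtain ⟨hk1, hk2⟩ := Submodule.mem_prod.mp hk
      refine ⟨k.2, hk2, ?_⟩
      have hk1' : k.1 = 0 := hk1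
      have hlk : l = ((0 : M₁), b) - k := by rw [← hkl]; abel
      have heq : ((0 : M₁), b - k.2) = l := by
        rw [hlk]; ext <;> simp [hk1']
      rw [heq]; exact hl
    -- hence N ⊔ comap inr L = ⊤, so comap inr L = ⊤, so {0}×M₂ ⊆ L
    have hcomap : N ⊔ L.comap (LinearMap.inr R M₁ M₂) = ⊤ := by
      rw [eq_top_iff]
      intro b _
      obtain ⟨n, hn, hbn⟩ := hinr b
      exact Submodule.mem_sup.mpr ⟨n, hn, b - n, hbn, by abel⟩
    have hbot : ∀ b : M₂, ((0 : M₁), b) ∈ L := by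
      intro b
      have := hNs _ hcomap
      have : b ∈ L.comap (LinearMap.inr R M₁ M₂) := this ▸ trivial
      exact this
    -- now conclude L = ⊤
    rw [eq_top_iff]
    rintro ⟨a, b⟩ _
    have hb : ((a : M₁), b) ∈ K ⊔ L := by rw [hL]; trivial
    obtain ⟨k, hk, l, hl, hkl⟩ := Submodule.mem_sup.mp hb
    obtain ⟨hk1, hk2⟩ := Submodule.mem_prod.mp hk
    have hk1' : k.1 = 0 := hk1
    have : (a, b) = l + ((0 : M₁), k.2) := by
      rw [← hkl]; ext <;> simp [hk1'] <;> abel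
    rw [this]
    exact L.add_mem hl (hbot k.2)
  -- the embedding M₂/N → (M₁×M₂)/K
  have hinrK : N ≤ Submodule.comap (LinearMap.inr R M₁ M₂) K := by
    intro n hn
    exact Submodule.mem_prod.mpr ⟨Submodule.zero_mem _, hn⟩
  set ι : (M₂ ⧸ N) →ₗ[R] ((M₁ × M₂) ⧸ K) := Submodule.mapQ N K (LinearMap.inr R M₁ M₂) hinrK
    with hιdef
  have hι : ∀ b : M₂, ι (N.mkQ b) = K.mkQ (0, b) := fun b => rfl
  -- the projection (M₁×M₂)/K → M₂/N
  have hpK : K ≤ LinearMap.ker (N.mkQ ∘ₗ LinearMap.snd R M₁ M₂) := by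
    rintro ⟨x₁, x₂⟩ hx
    obtain ⟨-, hx2⟩ := Submodule.mem_prod.mp hx
    simpa [LinearMap.mem_ker, Submodule.Quotient.mk_eq_zero] using hx2
  set p : ((M₁ × M₂) ⧸ K) →ₗ[R] (M₂ ⧸ N) :=
    K.liftQ (N.mkQ ∘ₗ LinearMap.snd R M₁ M₂) hpK with hpdef
  have hp : ∀ x : M₁ × M₂, p (K.mkQ x) = N.mkQ x.2 := fun x => rfl
  have hpι : ∀ z : M₂ ⧸ N, p (ι z) = z := by
    intro z
    obtain ⟨b, rfl⟩ := N.mkQ_surjective z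
    rw [hι, hp]
  -- the maps θ⁺, θ⁻ and induced η, η'
  set θp : (M₁ × M₂) →ₗ[R] ((M₁ × M₂) ⧸ K) :=
    K.mkQ + ι ∘ₗ f ∘ₗ LinearMap.fst R M₁ M₂ with hθpdef
  set θm : (M₁ × M₂) →ₗ[R] ((M₁ × M₂) ⧸ K) :=
    K.mkQ - ι ∘ₗ f ∘ₗ LinearMap.fst R M₁ M₂ with hθmdef
  have hθp : ∀ x : M₁ × M₂, θp x = K.mkQ x + ι (f x.1) := fun x => rfl
  have hθm : ∀ x : M₁ × M₂, θm x = K.mkQ x - ι (f x.1) := fun x => rfl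
  have hkerp : K ≤ LinearMap.ker θp := by
    rintro ⟨x₁, x₂⟩ hx
    obtain ⟨hx1, hx2⟩ := Submodule.mem_prod.mp hx
    have hx1' : x₁ = 0 := hx1
    subst hx1'
    rw [LinearMap.mem_ker, hθp]
    have h0 : K.mkQ (0, x₂) = 0 := (Submodule.Quotient.mk_eq_zero K).mpr hx
    simp [h0, ← mkQ_apply]
  have hkerm : K ≤ LinearMap.ker θm := by
    rintro ⟨x₁, x₂⟩ hx
    obtain ⟨hx1, hx2⟩ := Submodule.mem_prod.mp hx
    have hx1' : x₁ = 0 := hx1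
    subst hx1'
    rw [LinearMap.mem_ker, hθm]
    have h0 : K.mkQ (0, x₂) = 0 := (Submodule.Quotient.mk_eq_zero K).mpr hx
    simp [h0, ← mkQ_apply]
  set η : ((M₁ × M₂) ⧸ K) →ₗ[R] ((M₁ × M₂) ⧸ K) := K.liftQ θp hkerp with hηdef
  set ηm : ((M₁ × M₂) ⧸ K) →ₗ[R] ((M₁ × M₂) ⧸ K) := K.liftQ θm hkerm with hηmdef
  have hη : ∀ x : M₁ × M₂, η (K.mkQ x) = K.mkQ x + ι (f x.1) := fun x => rfl
  have hηm : ∀ x : M₁ × M₂, ηm (K.mkQ x) = K.mkQ x - ι (f x.1) := fun x => rfl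
  -- η fixes the image of ι
  have hηι : ∀ z : M₂ ⧸ N, η (ι z) = ι z := by
    intro z
    obtain ⟨b, rfl⟩ := N.mkQ_surjective z
    rw [hι, hη]
    simp
  -- ηm is a two-sided inverse of η
  have hinv1 : ∀ u, η (ηm u) = u := by
    intro u
    obtain ⟨x, rfl⟩ := K.mkQ_surjective u
    rw [hηm, map_sub, hη, hηι]
    abel
  have hinv2 : ∀ u, ηm (η u) = u := by
    intro u
    obtain ⟨x, rfl⟩ := K.mkQ_surjective u
    have hηmι : ∀ z : M₂ ⧸ N, ηm (ι z) = ι z := by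
      intro z
      obtain ⟨b, rfl⟩ := N.mkQ_surjective z
      rw [hι, hηm]
      simp
    rw [hη, map_add, hηm, hηmι]
    abel
  have hsurj : Function.Surjective η := fun u => ⟨ηm u, hinv1 u⟩
  have hinj : Function.Injective η := Function.LeftInverse.injective hinv2
  have hkerη : IsSmall (LinearMap.ker η) := by
    rw [LinearMap.ker_eq_bot.mpr hinj]
    intro L hL
    simpa using hL
  obtain ⟨φ, hφ⟩ := h K K hKsmall hKsmall η hsurj hkerη
  refine ⟨LinearMap.snd R M₁ M₂ ∘ₗ φ ∘ₗ LinearMap.inl R M₁ M₂, ?_⟩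
  ext a
  have hx := congrArg (fun ψ => ψ ((a : M₁), (0 : M₂))) hφ
  simp only [LinearMap.coe_comp, Function.comp_apply, mkQ_apply] at hx
  have hpx := congrArg p hx
  rw [← mkQ_apply, hp, ← mkQ_apply, hη, map_add, hp, hpι] at hpx
  simp only [LinearMap.coe_comp, Function.comp_apply, LinearMap.snd_apply,
    LinearMap.inl_apply, mkQ_apply]
  rw [← mkQ_apply, hpx]
  simp

/-- If M₁, M₂ are local modules with M₁ ⊕ M₂ dual automorphism-invariant, then
M₁ is M₂-projective and M₂ is M₁-projective. -/
theorem local_dualAutoInv_prod_relProjective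
    {R : Type*} [Ring R] {M₁ M₂ : Type*} [AddCommGroup M₁] [Module R M₁]
    [AddCommGroup M₂] [Module R M₂]
    (h₁ : IsLocalModule R M₁) (h₂ : IsLocalModule R M₂)
    (h : IsDualAutoInv R (M₁ × M₂)) :
    IsRelProjective R M₁ M₂ ∧ IsRelProjective R M₂ M₁ :=
  ⟨relProj_of_hollow_dualAutoInv h₂.1 h,
   relProj_of_hollow_dualAutoInv h₁.1
     (isDualAutoInv_congr (LinearEquiv.prodComm R M₁ M₂) h)⟩
end

section
/- If M is a supplemented dual automorphism-invariant right R-module, then M satisfies the property (D3): whenever A and B are direct summands of M with A + B = M, the submodule A ∩ B is a direct summand of M. -/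
open LinearMap Submodule

/-- M is supplemented: every submodule N of M has a supplement, i.e. a submodule K
minimal with respect to K + N = M. -/
def IsSupplemented (R M : Type*) [Ring R] [AddCommGroup M] [Module R M] : Prop :=
  ∀ N : Submodule R M, ∃ K : Submodule R M,
    K ⊔ N = ⊤ ∧ ∀ K' : Submodule R M, K' ≤ K → K' ⊔ N = ⊤ → K' = K

/-!
Take a supplement `L` of `(A ⊓ B) ⊔ A'` and project it to `A` along `A'`: the image `K`
satisfies `K ≤ A`, `K ⊔ B = ⊤` and `K ⊓ B` small. Modulo the small submodule `N = K ⊓ B`, the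
images of `K` and `B` are complementary, so `M ⧸ N ≅ K/N ⊕ B/N ≅ B' ⊕ B/N`; this gives an
epimorphism `α : M → M ⧸ N` with kernel `N`, which is the quotient map on `B` and carries `B'`
into `K/N`. Dual automorphism-invariance lifts `α` to an endomorphism `φ` of `M`, and `φ(B')` is
a complement of `B` inside `K ≤ A`. By modularity `A = (A ⊓ B) ⊕ φ(B')`, so `A ⊓ B` has the
complement `φ(B') ⊔ A'`.
-/

theorem isCompl_inf_sup_of_le {α : Type*} [Lattice α] [BoundedOrder α] [IsModularLattice α]
    {A A' B C : α} (hA : IsCompl A A') (hB : IsCompl B C) (hCA : C ≤ A) :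
    IsCompl (A ⊓ B) (C ⊔ A') := by
  have hC : (C ⊔ A') ⊓ A = C := by
    rw [sup_inf_assoc_of_le A' hCA, inf_comm, hA.inf_eq_bot, sup_bot_eq]
  have hA_eq : C ⊔ B ⊓ A = A := by
    rw [← sup_inf_assoc_of_le B hCA, sup_comm, hB.sup_eq_top, top_inf_eq]
  refine .of_eq ?_ ?_
  · calc A ⊓ B ⊓ (C ⊔ A') = B ⊓ ((C ⊔ A') ⊓ A) := by ac_rfl
      _ = ⊥ := by rw [hC, hB.inf_eq_bot]
  · calc A ⊓ B ⊔ (C ⊔ A') = (C ⊔ B ⊓ A) ⊔ A' := by rw [inf_comm]; ac_rfl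
      _ = ⊤ := by rw [hA_eq, hA.sup_eq_top]

section Module

variable {R M : Type*} [Ring R] [AddCommGroup M] [Module R M]

namespace IsSmall

theorem mono {N N' : Submodule R M} (h : N ≤ N') (hN' : IsSmall N') : IsSmall N :=
  fun K hK => hN' K (top_le_iff.1 (hK ▸ sup_le_sup_right h K))

theorem map {M₂ : Type*} [AddCommGroup M₂] [Module R M₂] {N : Submodule R M} (hN : IsSmall N)
    (f : M →ₗ[R] M₂) : IsSmall (N.map f) := by
  intro X hX
  have hcomap : N ⊔ X.comap f = ⊤ := by
    refine eq_top_iff.2 fun m _ => ?_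
    have hm : f m ∈ N.map f ⊔ X := hX ▸ mem_top
    obtain ⟨_, ⟨n, hn, rfl⟩, x, hx, hnx⟩ := mem_sup.1 hm
    refine mem_sup.2 ⟨n, hn, m - n, ?_, add_sub_cancel n m⟩
    simpa [mem_comap, map_sub, ← hnx] using hx
  have hNX : N.map f ≤ X := map_le_iff_le_comap.2 (hN _ hcomap ▸ le_top)
  rwa [sup_eq_right.2 hNX] at hX

end IsSmall

theorem isSmall_inf_of_minimal {K N : Submodule R M} (hKN : K ⊔ N = ⊤)
    (hmin : ∀ K' ≤ K, K' ⊔ N = ⊤ → K' = K) : IsSmall (K ⊓ N) := by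
  intro X hX
  have hK : K ⊓ N ⊔ X ⊓ K = K := by
    rw [← sup_inf_assoc_of_le X inf_le_left, hX, top_inf_eq]
  have hK_le : K ≤ X ⊓ K ⊔ N :=
    hK.ge.trans (sup_le (inf_le_right.trans le_sup_right) le_sup_left)
  have hXKN : X ⊓ K ⊔ N = ⊤ := by
    rw [eq_top_iff, ← hKN]; exact sup_le hK_le le_sup_right
  have hXK : X ⊓ K = K := hmin _ inf_le_right hXKN
  rw [← hX, right_eq_sup]
  exact inf_le_left.trans (hXK ▸ inf_le_left)

theorem IsSupplemented.exists_le_sup_eq_isSmall_inf (hsupp : IsSupplemented R M)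
    {A A' N : Submodule R M} (hA : IsCompl A A') (hN : N ≤ A) :
    ∃ K ≤ A, K ⊔ N = A ∧ IsSmall (K ⊓ N) := by
  obtain ⟨L, hLN, hLmin⟩ := hsupp (N ⊔ A')
  set π := A.projection A' hA
  have hπN : N.map π = N := by
    ext x
    refine ⟨?_, fun hx => ⟨x, hx, projection_apply_of_mem_left hA (hN hx)⟩⟩
    rintro ⟨n, hn, rfl⟩
    rwa [projection_apply_of_mem_left hA (hN hn)]
  refine ⟨L.map π, map_le_range.trans (range_projection hA).le, ?_, ?_⟩
  · calc L.map π ⊔ N = (L ⊔ (N ⊔ A')).map π := by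
          rw [Submodule.map_sup, Submodule.map_sup, hπN,
            le_ker_iff_map.1 (ker_projection hA).ge, sup_bot_eq]
      _ = A := by rw [hLN, Submodule.map_top, range_projection]
  · refine ((isSmall_inf_of_minimal hLN hLmin).map π).mono ?_
    rintro _ ⟨⟨l, hl, rfl⟩, hlN⟩
    exact ⟨l, ⟨hl, mem_sup.2 ⟨π l, hlN, l - π l, sub_projection_mem hA l, add_sub_cancel _ _⟩⟩,
      rfl⟩

theorem IsDualAutoInv.exists_comp_mkQ_eq (hdai : IsDualAutoInv R M) {N : Submodule R M}
    (hN : IsSmall N) (α : M →ₗ[R] M ⧸ N) (hα : Function.Surjective α)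
    (hker : IsSmall (ker α)) : ∃ φ : M →ₗ[R] M, N.mkQ ∘ₗ φ = α := by
  set η := (⊥ : Submodule R M).liftQ α bot_le
  have hη : Function.Surjective η := .of_comp (f := η) (g := (⊥ : Submodule R M).mkQ) hα
  have hkerη : IsSmall (ker η) := by rw [ker_liftQ]; exact hker.map _
  obtain ⟨φ, hφ⟩ := hdai ⊥ N (hN.mono bot_le) hN η hη hkerη
  exact ⟨φ, hφ.trans (liftQ_mkQ _ _ _)⟩

theorem mkQ_mem_map_mkQ_iff {N K : Submodule R M} (h : N ≤ K) {x : M} :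
    N.mkQ x ∈ K.map N.mkQ ↔ x ∈ K := by
  rw [← mem_comap, comap_map_mkQ, sup_eq_right.2 h]

theorem isCompl_map_mkQ_inf {K B : Submodule R M} (hKB : K ⊔ B = ⊤) :
    IsCompl (K.map (K ⊓ B).mkQ) (B.map (K ⊓ B).mkQ) := by
  refine .of_eq ?_ (by rw [← Submodule.map_sup, hKB, Submodule.map_top, range_mkQ])
  rw [← map_comap_eq_of_surjective (mkQ_surjective _) (_ ⊓ _), comap_inf, comap_map_mkQ,
    comap_map_mkQ, sup_eq_right.2 inf_le_left, sup_eq_right.2 inf_le_right, mkQ_map_self]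

theorem isCompl_range_of_sub_mem {B B' : Submodule R M} (hB : IsCompl B B') (f : B' →ₗ[R] M)
    (hf : ∀ b, f b - b ∈ B) : IsCompl B (range f) := by
  refine ⟨disjoint_def.2 ?_, codisjoint_iff.2 (eq_top_iff.2 ?_)⟩
  · rintro _ hfb ⟨b, rfl⟩
    have hb : (b : M) ∈ B := by simpa using sub_mem hfb (hf b)
    rw [show b = 0 from Subtype.ext (disjoint_def.1 hB.disjoint b hb b.2), map_zero]
  · rw [← hB.sup_eq_top]
    refine sup_le le_sup_left fun b hb =>
      mem_sup.2 ⟨_, neg_mem (hf ⟨b, hb⟩), _, mem_range_self f ⟨b, hb⟩, by abel⟩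

theorem exists_surjective_ker_le_inf {B B' K : Submodule R M} (hB : IsCompl B B')
    (hKB : K ⊔ B = ⊤) :
    ∃ α : M →ₗ[R] M ⧸ (K ⊓ B), Function.Surjective α ∧ ker α ≤ K ⊓ B ∧
      ∀ b ∈ B', α b ∈ K.map (K ⊓ B).mkQ ∧
        α b - (K ⊓ B).mkQ b ∈ B.map (K ⊓ B).mkQ := by
  set N := K ⊓ B
  have hc := isCompl_map_mkQ_inf hKB
  set P := (K.map N.mkQ).projection (B.map N.mkQ) hc
  set πB := B.projection B' hB
  let α := N.mkQ ∘ₗ πB + P ∘ₗ N.mkQ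
  have hα_apply (x : M) : α x = N.mkQ (πB x) + P (N.mkQ x) := rfl
  have hαB : ∀ b ∈ B, α b = N.mkQ b := fun b hb => by
    rw [hα_apply, projection_apply_of_mem_left hB hb,
      projection_apply_of_mem_right hc (mem_map_of_mem hb), add_zero]
  have hαB' : ∀ b ∈ B', α b = P (N.mkQ b) := fun b hb => by
    rw [hα_apply, projection_apply_of_mem_right hB hb, map_zero, zero_add]
  refine ⟨α, ?_, fun x hx => ?_, fun b hb => ?_⟩
  · rw [← range_eq_top, eq_top_iff, ← hc.sup_eq_top]
    refine sup_le ?_ fun _ ⟨b, hb, hbx⟩ => ⟨b, (hαB b hb).trans hbx⟩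
    rintro _ ⟨k, hk, rfl⟩
    refine ⟨k - πB k, ?_⟩
    rw [map_sub, hαB _ (projection_apply_mem hB k), hα_apply,
      projection_apply_of_mem_left hc (mem_map_of_mem hk), add_sub_cancel_left]
  · have hPx : P (N.mkQ x) = 0 := by
      have := congrArg P (mem_ker.1 hx)
      rwa [hα_apply, map_add, map_zero,
        projection_apply_of_mem_right hc (mem_map_of_mem (projection_apply_mem hB x)),
        projection_apply_of_mem_left hc (projection_apply_mem hc _), zero_add] at this
    have hxB : x ∈ B :=
      (mkQ_mem_map_mkQ_iff inf_le_right).1 ((projection_apply_eq_zero_iff hc).1 hPx)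
    rw [← ker_mkQ N, mem_ker, ← hαB x hxB]
    exact mem_ker.1 hx
  · rw [hαB' b hb, sub_mem_comm_iff, ← projection_eq_self_sub_projection]
    exact ⟨projection_apply_mem hc _, projection_apply_mem hc.symm _⟩

theorem IsDualAutoInv.exists_isCompl_le (hdai : IsDualAutoInv R M) {B B' K : Submodule R M}
    (hB : IsCompl B B') (hKB : K ⊔ B = ⊤) (hsmall : IsSmall (K ⊓ B)) :
    ∃ C ≤ K, IsCompl B C := by
  obtain ⟨α, hα, hker, hαB'⟩ := exists_surjective_ker_le_inf hB hKB
  obtain ⟨φ, hφ⟩ := hdai.exists_comp_mkQ_eq hsmall α hα (hsmall.mono hker)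
  have hmkQφ (x : M) : (K ⊓ B).mkQ (φ x) = α x := LinearMap.congr_fun hφ x
  refine ⟨range (φ ∘ₗ B'.subtype), ?_, isCompl_range_of_sub_mem hB _ fun b => ?_⟩
  · rintro _ ⟨b, rfl⟩
    exact (mkQ_mem_map_mkQ_iff (inf_le_left : K ⊓ B ≤ K)).1 (hmkQφ b ▸ (hαB' b b.2).1)
  · refine (mkQ_mem_map_mkQ_iff (inf_le_right : K ⊓ B ≤ B)).1 ?_
    rw [map_sub, comp_apply, subtype_apply, hmkQφ]
    exact (hαB' b b.2).2

end Module

/-- A supplemented dual automorphism-invariant module satisfies (D3): if A and B are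
direct summands of M with A + B = M, then A ∩ B is a direct summand of M. -/
theorem supplemented_dualAutoInv_D3
    {R M : Type*} [Ring R] [AddCommGroup M] [Module R M]
    (hsupp : IsSupplemented R M) (hdai : IsDualAutoInv R M)
    (A B : Submodule R M) (hA : ∃ A' : Submodule R M, IsCompl A A')
    (hB : ∃ B' : Submodule R M, IsCompl B B') (hAB : A ⊔ B = ⊤) :
    ∃ C : Submodule R M, IsCompl (A ⊓ B) C := by
  obtain ⟨A', hA'⟩ := hA
  obtain ⟨B', hB'⟩ := hB
  obtain ⟨K, hKA, hKsup, hKsmall⟩ := hsupp.exists_le_sup_eq_isSmall_inf hA' inf_le_left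
  have hKB : K ⊔ B = ⊤ := by
    rw [eq_top_iff, ← hAB, ← hKsup, sup_assoc, sup_eq_right.2 (inf_le_right : A ⊓ B ≤ B)]
  have hKAB : K ⊓ (A ⊓ B) = K ⊓ B := by rw [← inf_assoc, inf_eq_left.2 hKA]
  obtain ⟨C, hCK, hBC⟩ := hdai.exists_isCompl_le hB' hKB (hKAB ▸ hKsmall)
  exact ⟨C ⊔ A', isCompl_inf_sup_of_le hA' hBC (hCK.trans hKA)⟩
end

section
/- Let P be a projective abelian group (i.e., a free abelian group) and let M be a torsion quasi-projective abelian group. Then the abelian group P ⊕ M is dual automorphism-invariant as a ℤ-module. -/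
open LinearMap Submodule

/-- M is quasi-projective: every homomorphism M → M/N lifts to an endomorphism of M. -/
def IsQuasiProjective (R M : Type*) [Ring R] [AddCommGroup M] [Module R M] : Prop :=
  ∀ (N : Submodule R M) (φ : M →ₗ[R] M ⧸ N), ∃ ψ : M →ₗ[R] M, N.mkQ ∘ₗ ψ = φ

/-!
A small subgroup of `P ⊕ M` projects onto a small subgroup of the free group `P`, and a free
abelian group has no nonzero small subgroups: a nonzero coordinate `x` of an element escapes the
maximal subgroup `pℤ` for every prime `p > |x|`. So `K₂` lies in `0 ⊕ M`, and it suffices to lift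
any map `P ⊕ M → (P ⊕ M)/K₂` along the projection. On `P` this is projectivity. On `M` the map has
no `P`-component, because `M` is torsion and `P` torsion-free; it therefore factors through
`M/K₂'` with `K₂ = 0 ⊕ K₂'`, where quasi-projectivity of `M` lifts it.
-/

section Small

variable {R A B : Type*} [Ring R] [AddCommGroup A] [Module R A] [AddCommGroup B] [Module R B]

theorem IsSmall.map_of_surjective {N : Submodule R A} (hN : IsSmall N) {f : A →ₗ[R] B}
    (hf : Function.Surjective f) : IsSmall (N.map f) := by
  intro K hK
  have hcomap : N ⊔ K.comap f = ⊤ := by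
    have hker : ker f ≤ N ⊔ K.comap f := (ker_le_comap (p := K) f).trans le_sup_right
    rw [← sup_eq_left.mpr hker, ← comap_map_eq, Submodule.map_sup,
      map_comap_eq_of_surjective hf, hK, comap_top]
  rw [← map_comap_eq_of_surjective hf K, hN _ hcomap, Submodule.map_top, range_eq_top.mpr hf]

theorem IsSmall.le_of_isCoatom {N K : Submodule R A} (hN : IsSmall N) (hK : IsCoatom K) :
    N ≤ K := by
  by_contra hNK
  exact hK.1 (hN K (hK.2 _ (lt_of_le_not_ge le_sup_right fun h => hNK (le_sup_left.trans h))))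

end Small

theorem IsSmall.eq_bot_of_int {I : Submodule ℤ ℤ} (hI : IsSmall I) : I = ⊥ := by
  refine (Submodule.eq_bot_iff I).mpr fun x hx => ?_
  obtain ⟨p, hxp, hp⟩ := Nat.exists_infinite_primes (x.natAbs + 1)
  have := Fact.mk hp
  have hdvd : (p : ℤ) ∣ x :=
    Ideal.mem_span_singleton.mp (hI.le_of_isCoatom (Ideal.isMaximal_def.mp inferInstance) hx)
  exact Int.natAbs_eq_zero.mp (Nat.eq_zero_of_dvd_of_lt (Int.natCast_dvd.mp hdvd) hxp)

theorem IsSmall.eq_bot_of_free {P : Type*} [AddCommGroup P] [Module.Free ℤ P]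
    {N : Submodule ℤ P} (hN : IsSmall N) : N = ⊥ := by
  let b := Module.Free.chooseBasis ℤ P
  refine (Submodule.eq_bot_iff N).mpr fun x hx => b.forall_coord_eq_zero_iff.mp fun i => ?_
  have hsurj : Function.Surjective (b.coord i) := fun c => ⟨c • b i, by simp⟩
  have hbot := (hN.map_of_surjective hsurj).eq_bot_of_int
  exact (Submodule.eq_bot_iff _).mp hbot _ (mem_map_of_mem hx)

theorem IsSmall.le_ker_fst {P M : Type*} [AddCommGroup P] [AddCommGroup M] [Module.Free ℤ P]
    {K : Submodule ℤ (P × M)} (hK : IsSmall K) : K ≤ ker (fst ℤ P M) := by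
  rw [ker, ← map_le_iff_le_comap, (hK.map_of_surjective fst_surjective).eq_bot_of_free]

theorem LinearMap.eq_zero_of_isAddTorsion {M N : Type*} [AddCommGroup M] [AddCommGroup N]
    [IsAddTorsionFree N] (htor : IsAddTorsion M) (f : M →ₗ[ℤ] N) : f = 0 :=
  ext fun m => (f.toAddMonoidHom.isOfFinAddOrder (htor m)).eq_zero'

section Lift

variable {P M : Type*} [AddCommGroup P] [AddCommGroup M] {K : Submodule ℤ (P × M)}

theorem exists_lift_inr_of_le_ker_fst [IsAddTorsionFree P] (htor : IsAddTorsion M)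
    (hM : IsQuasiProjective ℤ M) (hK : K ≤ ker (fst ℤ P M)) (β : M →ₗ[ℤ] (P × M) ⧸ K) :
    ∃ ψ : M →ₗ[ℤ] M, K.mkQ ∘ₗ inr ℤ P M ∘ₗ ψ = β := by
  set K' := K.comap (inr ℤ P M)
  have hinr : ∀ z : P × M, z.1 = 0 → inr ℤ P M z.2 = z := fun z hz => Prod.ext hz.symm rfl
  have hsnd : K ≤ K'.comap (snd ℤ P M) := fun z hz => by
    show inr ℤ P M z.2 ∈ K
    rwa [hinr z (hK hz)]
  let j := K'.mapQ K (inr ℤ P M) le_rfl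
  let q := K.mapQ K' (snd ℤ P M) hsnd
  have hfst : K.liftQ _ hK ∘ₗ β = 0 := eq_zero_of_isAddTorsion htor _
  have hjq : j ∘ₗ q ∘ₗ β = β := by
    ext m
    obtain ⟨z, hz⟩ := K.mkQ_surjective (β m)
    have hz1 : z.1 = 0 := by simpa [← hz] using LinearMap.congr_fun hfst m
    simp only [comp_apply, ← hz, mkQ_apply, mapQ_apply, j, q]
    rw [snd_apply, hinr z hz1]
  obtain ⟨ψ, hψ⟩ := hM K' (q ∘ₗ β)
  refine ⟨ψ, ?_⟩
  calc K.mkQ ∘ₗ inr ℤ P M ∘ₗ ψ = j ∘ₗ K'.mkQ ∘ₗ ψ := by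
        rw [← comp_assoc, ← comp_assoc, mapQ_mkQ]
    _ = β := by rw [hψ, hjq]

theorem exists_lift_of_le_ker_fst [Module.Projective ℤ P] [IsAddTorsionFree P]
    (htor : IsAddTorsion M) (hM : IsQuasiProjective ℤ M) (hK : K ≤ ker (fst ℤ P M))
    (f : P × M →ₗ[ℤ] (P × M) ⧸ K) : ∃ φ : P × M →ₗ[ℤ] P × M, K.mkQ ∘ₗ φ = f := by
  obtain ⟨g, hg⟩ := Module.projective_lifting_property K.mkQ (f ∘ₗ inl ℤ P M) K.mkQ_surjective
  obtain ⟨ψ, hψ⟩ := exists_lift_inr_of_le_ker_fst htor hM hK (f ∘ₗ inr ℤ P M)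
  refine ⟨g.coprod (inr ℤ P M ∘ₗ ψ), prod_ext ?_ ?_⟩
  · rw [comp_assoc, coprod_inl, hg]
  · rw [comp_assoc, coprod_inr, hψ]

end Lift

/-- If P is a projective (= free) abelian group and M is a torsion quasi-projective
abelian group, then P ⊕ M is dual automorphism-invariant as a ℤ-module. -/
theorem free_torsionQuasiProjective_prod_dualAutoInv
    (P M : Type*) [AddCommGroup P] [AddCommGroup M]
    [Module.Free ℤ P] (htor : AddMonoid.IsTorsion M)
    (hM : IsQuasiProjective ℤ M) :
    IsDualAutoInv ℤ (P × M) := by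
  intro K₁ K₂ _ hK₂ η _ _
  have : IsAddTorsionFree P := Module.isTorsionFree_int_iff_isAddTorsionFree.mp inferInstance
  exact exists_lift_of_le_ker_fst htor hM hK₂.le_ker_fst _
end

section
/- Let G be a torsion abelian group that is dual automorphism-invariant as a ℤ-module. Then G is reduced, i.e., G has no nonzero divisible subgroup. -/
open LinearMap Submodule

/-- A torsion abelian group that is dual automorphism-invariant (as a ℤ-module)
is reduced: it has no nonzero divisible subgroup. -/
theorem torsion_dualAutoInv_reduced
    (G : Type*) [AddCommGroup G] (htor : AddMonoid.IsTorsion G)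
    (h : IsDualAutoInv ℤ G) :
    ∀ D : Submodule ℤ G,
      (∀ n : ℕ, 0 < n → ∀ d ∈ D, ∃ x ∈ D, (n : ℤ) • x = d) → D = ⊥ := by
  intro D hdiv
  by_contra hD
  obtain ⟨d₀, hd₀D, hd₀⟩ := (Submodule.ne_bot_iff D).mp hD
  have hfin : IsOfFinAddOrder d₀ := htor d₀
  set n := addOrderOf d₀ with hn
  have hn0 : 0 < n := hfin.addOrderOf_pos
  have hn1 : n ≠ 1 := fun h1 => hd₀ (AddMonoid.addOrderOf_eq_one_iff.mp h1)
  set p := n.minFac with hpdef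
  have hp : p.Prime := Nat.minFac_prime hn1
  have hp0 : (p : ℤ) ≠ 0 := by exact_mod_cast hp.pos.ne'
  set d : G := ((n / p : ℕ) : ℤ) • d₀ with hddef
  have hdD : d ∈ D := D.smul_mem _ hd₀D
  have hnd : (n : ℤ) • d₀ = 0 := by
    rw [natCast_zsmul]; exact addOrderOf_nsmul_eq_zero d₀
  have hpd : (p : ℤ) • d = 0 := by
    rw [hddef, smul_smul, ← Nat.cast_mul, Nat.mul_div_cancel' (Nat.minFac_dvd n), hnd]
  have hd0 : d ≠ 0 := by
    intro h0
    have h0' : (n / p) • d₀ = 0 := by rwa [hddef, natCast_zsmul] at h0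
    have hdvd : n ∣ n / p := addOrderOf_dvd_of_nsmul_eq_zero h0'
    have hlt : n / p < n := Nat.div_lt_self hn0 hp.one_lt
    have hpos : 0 < n / p := Nat.div_pos (Nat.minFac_le hn0) hp.pos
    exact absurd (Nat.le_of_dvd hpos hdvd) (not_le.mpr hlt)
  -- the p-divisibility chain
  choose f hfD hfe using hdiv p hp.pos
  let X : ℕ → {g : G // g ∈ D} := fun k =>
    Nat.rec ⟨d, hdD⟩ (fun _ ih => ⟨f ih.1 ih.2, hfD ih.1 ih.2⟩) k
  set x : ℕ → G := fun k => (X k).1 with hxdef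
  have hx0 : x 0 = d := rfl
  have hxp : ∀ k, (p : ℤ) • x (k + 1) = x k := fun k => hfe (X k).1 (X k).2
  have hshift : ∀ (j k : ℕ), ((p : ℤ)) ^ j • x (k + j) = x k := by
    intro j
    induction j with
    | zero => intro k; simp
    | succ j ih =>
      intro k
      have e1 : k + (j + 1) = (k + j) + 1 := rfl
      rw [e1, pow_succ, mul_smul, hxp (k + j), ih k]
  have hpk : ∀ k, ((p : ℤ)) ^ k • x k = d := by
    intro k
    have := hshift k 0
    rwa [Nat.zero_add, hx0] at this
  -- order of d is p
  have hpd' : ∀ m : ℤ, m • d = 0 → (p : ℤ) ∣ m := by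
    intro m hm
    by_contra hndvd
    have hcop : IsCoprime ((p : ℤ)) m := by
      rw [Int.isCoprime_iff_gcd_eq_one]
      have : ¬ p ∣ m.natAbs := fun hc => hndvd (Int.natCast_dvd.mpr hc)
      exact (Nat.Prime.coprime_iff_not_dvd hp).mpr this
    obtain ⟨a, b, hab⟩ := hcop
    have : d = 0 := by
      calc d = (1 : ℤ) • d := (one_smul ℤ d).symm
        _ = (a * p + b * m) • d := by rw [hab]
        _ = a • ((p : ℤ) • d) + b • (m • d) := by rw [add_smul, mul_smul, mul_smul]
        _ = 0 := by rw [hpd, hm, smul_zero, smul_zero, add_zero]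
    exact hd0 this
  have horder : ∀ k (m : ℤ), m • x k = 0 → ((p : ℤ)) ^ (k + 1) ∣ m := by
    intro k
    induction k with
    | zero =>
      intro m hm
      rw [hx0] at hm
      simpa using hpd' m hm
    | succ k ih =>
      intro m hm
      have h1 : m • x k = 0 := by
        rw [← hxp k, smul_comm, hm, smul_zero]
      obtain ⟨m', hm'⟩ := ih m h1
      have h2 : m' • d = 0 := by
        have e : m • x (k + 1) = m' • (((p : ℤ)) ^ (k + 1) • x (k + 1)) := by
          rw [smul_smul, hm', mul_comm]
        rw [e, hpk (k + 1)] at hm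
        exact hm
      obtain ⟨c, hc⟩ := hpd' m' h2
      exact ⟨c, by rw [hm', hc]; ring⟩
  -- the Prüfer-like submodule
  set P : Submodule ℤ G := span ℤ (Set.range x) with hP
  have hxP : ∀ k, x k ∈ P := fun k => subset_span ⟨k, rfl⟩
  have hdP : d ∈ P := hx0 ▸ hxP 0
  have hkey : ∀ (k K : ℕ), k ≤ K → ∀ c : ℤ, (c * (p : ℤ) ^ (K - k)) • x K = c • x k := by
    intro k K hkK c
    have hh := hshift (K - k) k
    rw [show k + (K - k) = K from by omega] at hh
    rw [← hh, smul_smul]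
  have hrep : ∀ g ∈ P, ∃ (k : ℕ) (c : ℤ), c • x k = g := by
    intro g hg
    induction hg using Submodule.span_induction with
    | mem g hg =>
      obtain ⟨k, rfl⟩ := hg
      exact ⟨k, 1, one_smul ℤ _⟩
    | zero => exact ⟨0, 0, zero_smul ℤ _⟩
    | add g₁ g₂ hg₁ hg₂ ih₁ ih₂ =>
      obtain ⟨k₁, c₁, hc₁⟩ := ih₁
      obtain ⟨k₂, c₂, hc₂⟩ := ih₂
      refine ⟨max k₁ k₂, c₁ * (p : ℤ) ^ (max k₁ k₂ - k₁) + c₂ * (p : ℤ) ^ (max k₁ k₂ - k₂), ?_⟩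
      rw [add_smul, hkey k₁ _ (le_max_left _ _), hkey k₂ _ (le_max_right _ _), hc₁, hc₂]
    | smul a g hg ih =>
      obtain ⟨k, c, hc⟩ := ih
      exact ⟨k, a * c, by rw [mul_smul, hc]⟩
  have hkerP : ∀ g ∈ P, (p : ℤ) • g = 0 → ∃ c : ℤ, g = c • d := by
    intro g hg hpg
    obtain ⟨k, c, hc⟩ := hrep g hg
    have h1 : ((p : ℤ) * c) • x k = 0 := by rw [mul_smul, hc, hpg]
    obtain ⟨m', hm'⟩ := horder k _ h1
    have hc2 : c = (p : ℤ) ^ k * m' := by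
      have : (p : ℤ) * c = (p : ℤ) * ((p : ℤ) ^ k * m') := by rw [hm']; ring
      exact mul_left_cancel₀ hp0 this
    refine ⟨m', ?_⟩
    rw [← hc, hc2, mul_comm, mul_smul, hpk k]
  -- P is divisible
  have hdivP : ∀ g ∈ P, ∀ t : ℤ, t ≠ 0 → ∃ y ∈ P, t • y = g := by
    have hpos : ∀ g ∈ P, ∀ t : ℤ, 0 < t → ∃ y ∈ P, t • y = g := by
      intro g hg t ht
      lift t to ℕ using ht.le with m
      have hm0 : m ≠ 0 := by exact_mod_cast ht.ne'
      obtain ⟨k, c, hc⟩ := hrep g hg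
      obtain ⟨a, u, hu, hmu⟩ := Nat.exists_eq_pow_mul_and_not_dvd hm0 p hp.ne_one
      have hcop : IsCoprime ((u : ℤ)) ((p : ℤ) ^ (k + a + 1)) := by
        apply IsCoprime.pow_right
        rw [Int.isCoprime_iff_gcd_eq_one]
        have : Nat.Coprime u p := (Nat.coprime_comm.mp ((Nat.Prime.coprime_iff_not_dvd hp).mpr hu))
        simpa [Int.gcd_natCast_natCast] using this
      obtain ⟨v, w, hvw⟩ := hcop
      refine ⟨(v * c) • x (k + a), P.smul_mem _ (hxP _), ?_⟩
      have hzero : ((p : ℤ)) ^ (k + a + 1) • x (k + a) = 0 := by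
        rw [pow_succ', mul_smul, hpk (k + a)]
        exact hpd
      have hmz : (m : ℤ) = (p : ℤ) ^ a * u := by exact_mod_cast congrArg (Nat.cast : ℕ → ℤ) hmu
      have e1 : (m : ℤ) * (v * c) = c * (p : ℤ) ^ a + (-(c * (p : ℤ) ^ a * w)) * (p : ℤ) ^ (k + a + 1) := by
        rw [hmz]; linear_combination (c * (p : ℤ) ^ a) * hvw
      rw [smul_smul, e1, add_smul, mul_smul (-(c * (p:ℤ) ^ a * w)) _ _, hzero, smul_zero, add_zero]
      have := hkey k (k + a) (by omega) c
      rw [show k + a - k = a from by omega] at this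
      rw [this, hc]
    intro g hg t ht
    rcases ht.lt_or_gt with hneg | hposq
    · obtain ⟨y, hyP, hy⟩ := hpos g hg (-t) (by omega)
      exact ⟨-y, P.neg_mem hyP, by rw [smul_neg, ← neg_smul]; exact hy⟩
    · exact hpos g hg t hposq
  -- P is injective, giving a retraction r : G → P
  have hBaer : Module.Baer ℤ P := by
    intro I g
    obtain ⟨a, ha⟩ := (IsPrincipalIdealRing.principal I).principal
    rcases eq_or_ne a 0 with rfl | ha0
    · refine ⟨0, fun r hr => ?_⟩
      have hr0 : r = 0 := by
        rw [ha, Submodule.span_zero_singleton] at hr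
        exact (Submodule.mem_bot ℤ).mp hr
      subst hr0
      have : (⟨0, hr⟩ : I) = 0 := by ext; rfl
      rw [this]
      simp
    · have haI : a ∈ I := by rw [ha]; exact Submodule.mem_span_singleton_self a
      -- noop
      set cq : P := g ⟨a, haI⟩ with hcq
      obtain ⟨y, hyP, hy⟩ := hdivP (cq : G) cq.2 a ha0
      refine ⟨LinearMap.toSpanSingleton ℤ P ⟨y, hyP⟩, fun r hr => ?_⟩
      obtain ⟨t, ht⟩ := Submodule.mem_span_singleton.mp (by rw [← ha]; exact hr)
      rw [smul_eq_mul] at ht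
      have hmem : (⟨r, hr⟩ : I) = t • (⟨a, haI⟩ : I) := by
        ext
        simp [← ht, mul_comm]
      have hay : a • (⟨y, hyP⟩ : P) = cq := by
        ext
        simpa using hy
      calc (LinearMap.toSpanSingleton ℤ (↥P) ⟨y, hyP⟩) r
          = r • (⟨y, hyP⟩ : P) := LinearMap.toSpanSingleton_apply ℤ (↥P) _ r
        _ = (t * a) • (⟨y, hyP⟩ : P) := by rw [ht]
        _ = t • (a • (⟨y, hyP⟩ : P)) := mul_smul t a _
        _ = t • cq := by rw [hay]
        _ = g (t • ⟨a, haI⟩) := by rw [hcq, map_smul]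
        _ = g ⟨r, hr⟩ := by rw [← hmem]
  have hinjP : Module.Injective ℤ P := hBaer.injective
  obtain ⟨r, hr0⟩ := hinjP.out P.subtype (injective_subtype P) LinearMap.id
  have hr : ∀ q : P, r ((q : G)) = q := fun q => by simpa using hr0 q
  have hrP : ∀ y : G, y ∈ P → ((r y : G)) = y := by
    intro y hy
    have := hr ⟨y, hy⟩
    exact congrArg Subtype.val this
  -- the endomorphism ψ
  set ψ : G →ₗ[ℤ] G := LinearMap.id + ((p : ℤ) - 1) • (P.subtype ∘ₗ r) with hψ
  have hψapp : ∀ g : G, ψ g = g + ((p : ℤ) - 1) • (r g : G) := fun g => rfl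
  have hψsurj : Function.Surjective ψ := by
    intro g
    obtain ⟨y, hyP, hy⟩ := hdivP ((r g : G)) (r g).2 p hp0
    refine ⟨g - (r g : G) + y, ?_⟩
    have hry : (r (g - (r g : G) + y) : G) = y := by
      rw [map_add, map_sub]
      have e1 : r ((r g : G)) = r g := hr (r g)
      rw [e1]
      have e2 : (r y : G) = y := hrP y hyP
      push_cast [e2]
      abel
    rw [hψapp, hry, sub_smul, one_smul]
    rw [hy]
    abel
  have hψker : ∀ g : G, ψ g = 0 → ∃ c : ℤ, g = c • d := by
    intro g hg
    have h1 : r g + ((p : ℤ) - 1) • r ((r g : G)) = 0 := by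
      have := congrArg r hg
      rwa [hψapp, map_add, map_smul, map_zero] at this
    rw [hr (r g)] at h1
    have h2 : (p : ℤ) • r g = 0 := by
      have : ((p : ℤ) - 1) • r g + r g = (p : ℤ) • r g := by
        rw [sub_smul, one_smul]; abel
      rw [← this, add_comm]; exact h1
    have h3 : (p : ℤ) • ((r g : G)) = 0 := by
      have := congrArg (Subtype.val : P → G) h2
      simpa using this
    obtain ⟨c, hc⟩ := hkerP ((r g : G)) (r g).2 h3
    refine ⟨(1 - (p : ℤ)) * c, ?_⟩
    have h4 : g = -(((p : ℤ) - 1) • ((r g : G))) := by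
      have e := (hψapp g).symm.trans hg
      exact eq_neg_of_add_eq_zero_left e
    rw [h4, hc, smul_smul, ← neg_smul]
    congr 1
    ring
  -- kernel of ψ is span {d}
  set S : Submodule ℤ G := span ℤ ({d} : Set G) with hS
  have hker : LinearMap.ker ψ = S := by
    ext g
    rw [LinearMap.mem_ker, hS, Submodule.mem_span_singleton]
    constructor
    · intro hg
      obtain ⟨c, hc⟩ := hψker g hg
      exact ⟨c, hc.symm⟩
    · rintro ⟨c, rfl⟩
      have hcdP : c • d ∈ P := P.smul_mem c hdP
      have hrcd : (r (c • d) : G) = c • d := hrP _ hcdP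
      rw [hψapp, hrcd]
      have e2 : c • d + ((p : ℤ) - 1) • (c • d) = c • ((p : ℤ) • d) := by
        module
      rw [e2, hpd, smul_zero]
  -- S is small
  have hSsmall : IsSmall S := by
    intro K hK
    have hdK : d ∈ K := by
      have hx1 : x 1 ∈ S ⊔ K := hK ▸ Submodule.mem_top
      obtain ⟨s, hs, k, hk, hsk⟩ := Submodule.mem_sup.mp hx1
      obtain ⟨c, hc⟩ := Submodule.mem_span_singleton.mp hs
      have : d = (p : ℤ) • k := by
        calc d = (p : ℤ) • x 1 := by rw [← hx0]; exact (hxp 0).symm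
          _ = (p : ℤ) • (s + k) := by rw [hsk]
          _ = (p : ℤ) • s + (p : ℤ) • k := smul_add _ _ _
          _ = (p : ℤ) • k := by
              rw [← hc, smul_smul, mul_comm, ← smul_smul, hpd, smul_zero, zero_add]
      rw [this]
      exact K.smul_mem _ hk
    have hle : S ≤ K := Submodule.span_le.mpr (by simpa using hdK)
    rw [← hK, sup_eq_right.mpr hle]
  -- the isomorphism η : G/⊥ ≃ G/S
  have e : (G ⧸ S) ≃ₗ[ℤ] G :=
    (Submodule.quotEquivOfEq S (LinearMap.ker ψ) hker.symm).trans
      (ψ.quotKerEquivOfSurjective hψsurj)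
  set q0 : (G ⧸ (⊥ : Submodule ℤ G)) ≃ₗ[ℤ] G := Submodule.quotEquivOfEqBot ⊥ rfl with hq0
  set η : (G ⧸ (⊥ : Submodule ℤ G)) →ₗ[ℤ] (G ⧸ S) :=
    (e.symm.toLinearMap) ∘ₗ q0.toLinearMap with hη
  have hηsurj : Function.Surjective η := e.symm.surjective.comp q0.surjective
  have hηinj : Function.Injective η := e.symm.injective.comp q0.injective
  have hηker : IsSmall (LinearMap.ker η) := by
    rw [LinearMap.ker_eq_bot.mpr hηinj]
    exact isSmall_bot
  obtain ⟨φ, hφ⟩ := h ⊥ S isSmall_bot hSsmall η hηsurj hηker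
  have hcomp : ∀ g : G, S.mkQ (φ g) = η ((⊥ : Submodule ℤ G).mkQ g) :=
    fun g => LinearMap.congr_fun hφ g
  have hmkQbot_inj : Function.Injective ((⊥ : Submodule ℤ G).mkQ) := by
    rw [← LinearMap.ker_eq_bot, Submodule.ker_mkQ]
  have hcinj : Function.Injective (fun g => S.mkQ (φ g)) := by
    intro a b hab
    simp only [hcomp] at hab
    exact hmkQbot_inj (hηinj hab)
  have hcsurj : Function.Surjective (fun g => S.mkQ (φ g)) := by
    intro z
    obtain ⟨w, hw⟩ := hηsurj z
    obtain ⟨g, hg⟩ := Submodule.mkQ_surjective (⊥ : Submodule ℤ G) w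
    refine ⟨g, ?_⟩
    show S.mkQ (φ g) = z
    rw [hcomp, hg, hw]
  have hrange : LinearMap.range φ ⊔ S = ⊤ := by
    rw [eq_top_iff]
    intro g _
    obtain ⟨g', hg'⟩ := hcsurj (S.mkQ g)
    have hg'' : S.mkQ (φ g') = S.mkQ g := hg'
    simp only [Submodule.mkQ_apply] at hg''
    have hmem : φ g' - g ∈ S := (Submodule.Quotient.eq S).mp hg''
    have : g = φ g' + -(φ g' - g) := by abel
    rw [this]
    exact Submodule.add_mem_sup (LinearMap.mem_range_self φ g') (S.neg_mem hmem)
  have hrangetop : LinearMap.range φ = ⊤ := hSsmall _ (by rwa [sup_comm] at hrange)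
  obtain ⟨g, hg⟩ := LinearMap.range_eq_top.mp hrangetop d
  have h1 : S.mkQ (φ g) = 0 := by
    rw [hg, Submodule.mkQ_apply, Submodule.Quotient.mk_eq_zero]
    exact Submodule.mem_span_singleton_self d
  have h2 : S.mkQ (φ (0 : G)) = 0 := by simp
  have hg0 : g = 0 := hcinj (h1.trans h2.symm)
  rw [hg0, map_zero] at hg
  exact hd0 hg.symm
end
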